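/- For all nonnegative integers n, k, r: the number of partitions μ of n whose 2-core is the staircase Δ_k = (k, k−1, …, 2, 1) and with h_{2,0}(μ) = r equals the number of partitions μ of n whose 2-core is Δ_k and with a_2(μ) = r. In other words, the statistics h_{2,0} and a_2 are equidistributed over the set of partitions of n with any fixed 2-core. -/

import Mathlib

open Polynomial

/-- A partition: a weakly decreasing, finitely supported sequence of naturals;
`parts i` is the `(i+1)`-st part `λ_{i+1}`. -/
structure SeqPartition where
  parts : ℕ → ℕ
  antitone : ∀ ⦃i j : ℕ⦄, i ≤ j → parts j ≤ parts i
  finite_support : (Function.support parts).Finite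

namespace SeqPartition

/-- Cells, 0-indexed: `(i, j)` is the cell in row `i+1`, column `j+1`. -/
def cells (μ : SeqPartition) : Set (ℕ × ℕ) := {c | c.2 < μ.parts c.1}

/-- The size `|μ|` of a partition: the number of cells of its Young diagram. -/
noncomputable def size (μ : SeqPartition) : ℕ := μ.cells.ncard

/-- The arm length of a cell: the number of cells in its row strictly to its right. -/
def arm (μ : SeqPartition) (c : ℕ × ℕ) : ℕ := μ.parts c.1 - (c.2 + 1)

/-- The leg length of a cell: the number of cells in its column strictly below it. -/
noncomputable def leg (μ : SeqPartition) (c : ℕ × ℕ) : ℕ :=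
  {r : ℕ | c.1 < r ∧ c.2 < μ.parts r}.ncard

/-- The number of nonzero parts. -/
noncomputable def numParts (μ : SeqPartition) : ℕ := {i : ℕ | μ.parts i ≠ 0}.ncard

end SeqPartition

/-- `h_{2,0}`: the number of cells with leg length `0` and odd arm length. -/
noncomputable def SeqPartition.h20 (μ : SeqPartition) : ℕ :=
  {c ∈ μ.cells | μ.leg c = 0 ∧ Odd (μ.arm c)}.ncard

/-- `a_2`: the largest part occurring at least twice (0 if no part repeats).
Since the parts are weakly decreasing, a value occurs twice iff it occurs at two
consecutive indices. -/
noncomputable def SeqPartition.a2 (μ : SeqPartition) : ℕ :=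
  sSup {v : ℕ | ∃ i, μ.parts i = v ∧ μ.parts (i + 1) = v}

/-- The staircase partition `Δ_k = (k, k-1, …, 2, 1)`. -/
noncomputable def staircase (k : ℕ) : SeqPartition where
  parts := fun i => k - i
  antitone := fun i j h => by show k - j ≤ k - i; omega
  finite_support := Set.Finite.subset (Set.finite_Iio k) (fun i hi => by
    simp only [Function.mem_support] at hi
    exact Set.mem_Iio.mpr (by omega))

/-- A single domino removal: either one part decreases by `2`, or two equal consecutive
parts each decrease by `1`. -/
def DominoStep (lam mu : SeqPartition) : Prop :=
  (∃ i, lam.parts i = mu.parts i + 2 ∧ ∀ j, j ≠ i → mu.parts j = lam.parts j) ∨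
  (∃ i, lam.parts i = lam.parts (i + 1) ∧ lam.parts i = mu.parts i + 1 ∧
    lam.parts (i + 1) = mu.parts (i + 1) + 1 ∧
    ∀ j, j ≠ i → j ≠ i + 1 → mu.parts j = lam.parts j)

/-- `mu` is the 2-core of `lam`: it is obtained from `lam` by repeated domino removals
and admits no further domino removal. -/
def TwoCoreOf (lam mu : SeqPartition) : Prop :=
  Relation.ReflTransGen DominoStep lam mu ∧ ∀ ν, ¬ DominoStep mu ν

/-!
Colour the cells like a chessboard. The signed number of cells is unchanged by domino
removals and takes different values on different staircases, so the 2-core of `λ` is `Δ_k`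
exactly when the signed counts of `λ` and `Δ_k` agree.

Writing every gap `g_i = λ_i - λ_{i+1}` as `(g_i % 2) + 2 (g_i / 2)` splits `λ` bijectively
into a partition `ρ` with all gaps at most one, with the same signed count as `λ`, and an
arbitrary partition `E` with gaps `g_i / 2`, and `|λ| = |ρ| + 2 |E|`. In row `i` the cells with
leg `0` are the last `g_i` ones, and `g_i / 2` of them have odd arm, so `h_{2,0}(λ) = E_1`.
Splitting the conjugate `λ'` instead, the gaps of `λ'` are the multiplicities of the parts of
`λ`, so `a_2(λ)` is the number of parts of `E`, i.e. the first part of `E'`. Conjugation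
preserves sizes and signed counts, so `λ ↦ (ρ, E)` and `λ ↦ (ρ(λ'), E(λ')')` are two
bijections onto the same pairs that carry `h_{2,0}` and `a_2` respectively to `E_1`.
-/

theorem Equiv.ncard_preimage {α β : Type*} (e : α ≃ β) (s : Set β) :
    (e ⁻¹' s).ncard = s.ncard :=
  Set.ncard_preimage_of_injective_subset_range e.injective (by simp)

theorem IsLowerSet.eq_Iio_ncard {s : Set ℕ} (hs : IsLowerSet s) (hfin : s.Finite) :
    s = Set.Iio s.ncard := by
  obtain h | ⟨a, rfl⟩ := hs.eq_univ_or_Iio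
  · exact absurd (h ▸ hfin) Set.infinite_univ
  · rw [Set.ncard_Iio_nat]

theorem sum_range_neg_one_pow (p : ℕ) :
    ∑ j ∈ Finset.range p, (-1 : ℤ) ^ j = (p % 2 : ℕ) := by
  induction p with
  | zero => simp
  | succ p ih =>
    rw [Finset.sum_range_succ, ih]
    rcases Nat.even_or_odd p with h | h
    · rw [h.neg_one_pow]
      have := Nat.even_iff.1 h
      omega
    · rw [h.neg_one_pow]
      have := Nat.odd_iff.1 h
      omega

theorem Finset.sum_range_congr_pair {M : Type*} [AddCommMonoid M] {f g : ℕ → M} {N i : ℕ}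
    (hi : i + 1 < N) (hoff : ∀ j, j ≠ i → j ≠ i + 1 → f j = g j)
    (hpair : f i + f (i + 1) = g i + g (i + 1)) :
    ∑ j ∈ Finset.range N, f j = ∑ j ∈ Finset.range N, g j := by
  have hsub : {i, i + 1} ⊆ Finset.range N := by
    intro j hj
    simp only [mem_insert, mem_singleton] at hj
    simp only [mem_range]
    omega
  rw [← sum_sdiff hsub, ← sum_sdiff hsub (f := g), sum_pair (by omega), sum_pair (by omega),
    hpair]
  congr 1
  refine sum_congr rfl fun j hj => ?_
  simp only [mem_sdiff, mem_insert, mem_singleton] at hj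
  exact hoff j (by omega) (by omega)

theorem card_filter_le_odd_sub {a b : ℕ} (hba : b ≤ a) :
    ((Finset.range a).filter fun j => b ≤ j ∧ Odd (a - (j + 1))).card = (a - b) / 2 := by
  rw [← Finset.card_range ((a - b) / 2)]
  refine Finset.card_bij' (fun j _ => (a - (j + 1)) / 2) (fun m _ => a - (2 * m + 2))
    ?_ ?_ ?_ ?_ <;> intro j hj <;>
    simp only [Finset.mem_filter, Finset.mem_range, Nat.odd_iff] at hj ⊢ <;> omega

namespace SeqPartition

@[ext] theorem ext {l m : SeqPartition} (h : l.parts = m.parts) : l = m := by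
  cases l; cases m; cases h; rfl

variable (l : SeqPartition)

theorem lt_numParts_iff {i : ℕ} : i < l.numParts ↔ l.parts i ≠ 0 := by
  have hlow : IsLowerSet {i | l.parts i ≠ 0} := fun a b hba hb => by
    have := l.antitone hba
    simp only [Set.mem_ofPred_eq] at *
    omega
  rw [← Set.mem_Iio, numParts, ← hlow.eq_Iio_ncard l.finite_support]
  rfl

theorem parts_eq_zero_of_numParts_le {i : ℕ} (h : l.numParts ≤ i) : l.parts i = 0 :=
  not_not.1 (mt l.lt_numParts_iff.2 (by omega))

def gap (i : ℕ) : ℕ := l.parts i - l.parts (i + 1)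

theorem parts_eq_gap_add (i : ℕ) : l.parts i = l.gap i + l.parts (i + 1) := by
  have := l.antitone (Nat.le_add_right i 1)
  unfold gap
  omega

theorem gap_eq_zero_of_numParts_le {i : ℕ} (h : l.numParts ≤ i) : l.gap i = 0 := by
  rw [gap, l.parts_eq_zero_of_numParts_le h, Nat.zero_sub]

noncomputable def cellFinset : Finset (ℕ × ℕ) :=
  (Finset.range l.numParts ×ˢ Finset.range (l.parts 0)).filter fun c => c.2 < l.parts c.1

theorem coe_cellFinset : (l.cellFinset : Set (ℕ × ℕ)) = l.cells := by
  ext ⟨i, j⟩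
  simp only [cellFinset, Finset.coe_filter, Finset.mem_product, Finset.mem_range, cells,
    Set.mem_ofPred_eq, and_iff_right_iff_imp]
  intro h
  exact ⟨l.lt_numParts_iff.2 (by omega), lt_of_lt_of_le h (l.antitone (Nat.zero_le i))⟩

theorem mem_cellFinset {c : ℕ × ℕ} : c ∈ l.cellFinset ↔ c ∈ l.cells := by
  rw [← Finset.mem_coe, coe_cellFinset]

theorem cells_finite : l.cells.Finite :=
  l.coe_cellFinset ▸ l.cellFinset.finite_toSet

theorem sum_cellFinset {M : Type*} [AddCommMonoid M] {N : ℕ}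
    (hN : ∀ i, N ≤ i → l.parts i = 0) (f : ℕ × ℕ → M) :
    ∑ c ∈ l.cellFinset, f c =
      ∑ i ∈ Finset.range N, ∑ j ∈ Finset.range (l.parts i), f (i, j) := by
  refine Finset.sum_finset_product _ _ _ fun c => ?_
  rw [mem_cellFinset, Finset.mem_range, Finset.mem_range]
  refine ⟨fun h => ⟨?_, h⟩, And.right⟩
  by_contra hc
  have : c.2 < l.parts c.1 := h
  rw [hN _ (by omega)] at this
  omega

theorem size_eq_sum {N : ℕ} (hN : ∀ i, N ≤ i → l.parts i = 0) :
    l.size = ∑ i ∈ Finset.range N, l.parts i := by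
  rw [size, ← coe_cellFinset, Set.ncard_coe_finset, Finset.card_eq_sum_ones,
    l.sum_cellFinset hN]
  simp

noncomputable def checkerSum : ℤ := ∑ c ∈ l.cellFinset, (-1) ^ (c.1 + c.2)

theorem checkerSum_eq_sum {N : ℕ} (hN : ∀ i, N ≤ i → l.parts i = 0) :
    l.checkerSum = ∑ i ∈ Finset.range N, (-1) ^ i * ((l.parts i % 2 : ℕ) : ℤ) := by
  rw [checkerSum, l.sum_cellFinset hN]
  refine Finset.sum_congr rfl fun i _ => ?_
  simp only [pow_add, ← Finset.mul_sum, sum_range_neg_one_pow]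

theorem leg_eq_zero_iff (c : ℕ × ℕ) : l.leg c = 0 ↔ l.parts (c.1 + 1) ≤ c.2 := by
  rw [leg, Set.ncard_eq_zero (l.finite_support.subset fun r hr => by
    simp only [Set.mem_ofPred_eq, Function.mem_support] at hr ⊢; omega),
    Set.eq_empty_iff_forall_notMem]
  simp only [Set.mem_ofPred_eq, not_and, not_lt]
  exact ⟨fun h => h _ (by omega), fun h r hr => (l.antitone hr).trans h⟩

theorem h20_eq_sum_gap : l.h20 = ∑ i ∈ Finset.range l.numParts, l.gap i / 2 := by
  have hN : ∀ i, l.numParts ≤ i → l.parts i = 0 := fun i => l.parts_eq_zero_of_numParts_le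
  have hcoe : {c ∈ l.cells | l.leg c = 0 ∧ Odd (l.arm c)} =
      ↑(l.cellFinset.filter fun c => l.leg c = 0 ∧ Odd (l.arm c)) := by
    ext c
    simp only [Finset.coe_filter, mem_cellFinset, Set.mem_ofPred_eq]
  rw [h20, hcoe, Set.ncard_coe_finset, Finset.card_filter, l.sum_cellFinset hN]
  refine Finset.sum_congr rfl fun i _ => ?_
  rw [← Finset.card_filter, gap, ← card_filter_le_odd_sub (l.antitone (Nat.le_add_right i 1))]
  simp only [leg_eq_zero_iff, arm]

def removeHorizontal (i : ℕ) (h : l.parts (i + 1) + 2 ≤ l.parts i) : SeqPartition where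
  parts j := if j = i then l.parts i - 2 else l.parts j
  antitone a b hab := by
    have := l.antitone hab
    split_ifs <;> (try have := l.antitone (show i + 1 ≤ b by omega)) <;>
      (try have := l.antitone (show a ≤ i by omega)) <;> omega
  finite_support := l.finite_support.subset fun j hj => by
    simp only [Function.mem_support] at hj ⊢
    split_ifs at hj with hji <;> [subst hji; skip] <;> omega

theorem dominoStep_removeHorizontal (i : ℕ) (h : l.parts (i + 1) + 2 ≤ l.parts i) :
    DominoStep l (l.removeHorizontal i h) := by
  refine Or.inl ⟨i, ?_, fun _ hj => if_neg hj⟩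
  simp only [removeHorizontal, if_pos]
  omega

def removeVertical (i : ℕ) (heq : l.parts (i + 1) = l.parts i)
    (hlt : l.parts (i + 2) < l.parts (i + 1)) : SeqPartition where
  parts j := if j = i ∨ j = i + 1 then l.parts i - 1 else l.parts j
  antitone a b hab := by
    have := l.antitone hab
    split_ifs <;> (try have := l.antitone (show i + 2 ≤ b by omega)) <;>
      (try have := l.antitone (show a ≤ i by omega)) <;> omega
  finite_support := l.finite_support.subset fun j hj => by
    simp only [Function.mem_support] at hj ⊢
    split_ifs at hj with hj' <;> [rcases hj' with rfl | rfl; skip] <;> omega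

theorem dominoStep_removeVertical (i : ℕ) (heq : l.parts (i + 1) = l.parts i)
    (hlt : l.parts (i + 2) < l.parts (i + 1)) : DominoStep l (l.removeVertical i heq hlt) := by
  refine Or.inr ⟨i, heq.symm, ?_, ?_, fun _ h1 h2 => if_neg (by omega)⟩ <;>
    simp only [removeVertical, true_or, or_true, if_true] <;> omega

theorem parts_le_parts_succ_add_one (hl : ∀ ν, ¬ DominoStep l ν) (i : ℕ) :
    l.parts i ≤ l.parts (i + 1) + 1 := by
  by_contra h
  exact hl _ (l.dominoStep_removeHorizontal i (by omega))

theorem parts_succ_lt (hl : ∀ ν, ¬ DominoStep l ν) {i : ℕ} (hi : l.parts i ≠ 0) :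
    l.parts (i + 1) < l.parts i := by
  by_contra h
  have heq : l.parts (i + 1) = l.parts i :=
    le_antisymm (l.antitone (Nat.le_add_right i 1)) (by omega)
  -- A vertical domino could be removed at the end of the run of parts equal to `l.parts i`.
  have hrun : ∀ d, l.parts (i + d + 1) = l.parts i := by
    intro d
    induction d with
    | zero => exact heq
    | succ d ih =>
      change l.parts (i + d + 2) = l.parts i
      have h1 : l.parts (i + d) = l.parts i :=
        le_antisymm (l.antitone (by omega)) (ih ▸ l.antitone (by omega))
      have h2 := l.antitone (show i + d + 1 ≤ i + d + 2 by omega)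
      by_contra hne
      exact hl _ (l.dominoStep_removeVertical (i + d) (by omega) (by omega))
  have := hrun l.numParts
  rw [l.parts_eq_zero_of_numParts_le (by omega)] at this
  omega

theorem eq_staircase_of_forall_not_dominoStep (hl : ∀ ν, ¬ DominoStep l ν) :
    l = staircase (l.parts 0) := by
  ext i
  change l.parts i = l.parts 0 - i
  induction i with
  | zero => simp
  | succ i ih =>
    have h1 := l.parts_le_parts_succ_add_one hl i
    have h2 := l.antitone (Nat.le_add_right i 1)
    by_cases h0 : l.parts i = 0
    · omega
    · have := l.parts_succ_lt hl h0
      omega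

end SeqPartition

namespace DominoStep

open SeqPartition

theorem parts_le {lam mu : SeqPartition} (h : DominoStep lam mu) (j : ℕ) :
    mu.parts j ≤ lam.parts j := by
  rcases h with ⟨i, hi, hoff⟩ | ⟨i, -, hi, hi', hoff⟩
  · by_cases hj : j = i
    · subst hj; omega
    · rw [hoff j hj]
  · by_cases hj : j = i ∨ j = i + 1
    · rcases hj with rfl | rfl <;> omega
    · push Not at hj
      rw [hoff j hj.1 hj.2]

theorem size_lt {lam mu : SeqPartition} (h : DominoStep lam mu) :
    mu.size < lam.size := by
  have hsub : mu.cells ⊆ lam.cells := fun c hc => lt_of_lt_of_le hc (h.parts_le c.1)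
  obtain ⟨i, hi⟩ : ∃ i, mu.parts i < lam.parts i := by
    rcases h with ⟨i, hi, -⟩ | ⟨i, -, hi, -⟩ <;> exact ⟨i, by omega⟩
  refine Set.ncard_lt_ncard (hsub.ssubset_of_not_subset fun h' => ?_) lam.cells_finite
  exact lt_irrefl _
    (show mu.parts i < mu.parts i from h' (show (i, mu.parts i) ∈ lam.cells from hi))

theorem checkerSum_eq {lam mu : SeqPartition} (h : DominoStep lam mu) :
    lam.checkerSum = mu.checkerSum := by
  have hlam : ∀ i, lam.numParts + 1 ≤ i → lam.parts i = 0 := fun i hi =>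
    lam.parts_eq_zero_of_numParts_le (by omega)
  have hmu : ∀ i, lam.numParts + 1 ≤ i → mu.parts i = 0 := fun i hi =>
    Nat.eq_zero_of_le_zero (hlam i hi ▸ h.parts_le i)
  rw [lam.checkerSum_eq_sum hlam, mu.checkerSum_eq_sum hmu]
  rcases h with ⟨i, hi, hoff⟩ | ⟨i, heq, hi, hi', hoff⟩
  · have : i < lam.numParts := lam.lt_numParts_iff.2 (by omega)
    refine Finset.sum_range_congr_pair (i := i) (by omega) (fun j hj _ => by rw [hoff j hj]) ?_
    rw [hoff (i + 1) (by omega), hi, Nat.add_mod_right]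
  · have : i + 1 < lam.numParts := lam.lt_numParts_iff.2 (by omega)
    refine Finset.sum_range_congr_pair (i := i) (by omega)
      (fun j hj hj' => by rw [hoff j hj hj']) ?_
    rw [← heq, show mu.parts (i + 1) = mu.parts i by omega, pow_succ]
    ring

end DominoStep

namespace SeqPartition

variable (l : SeqPartition)

theorem checkerSum_eq_of_reflTransGen {lam mu : SeqPartition}
    (h : Relation.ReflTransGen DominoStep lam mu) : lam.checkerSum = mu.checkerSum := by
  induction h with
  | refl => rfl
  | tail _ hstep ih => exact ih.trans hstep.checkerSum_eq

theorem exists_reflTransGen_staircase (μ : SeqPartition) :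
    ∃ k, Relation.ReflTransGen DominoStep μ (staircase k) := by
  by_cases hl : ∃ ν, DominoStep μ ν
  · obtain ⟨ν, hν⟩ := hl
    have := hν.size_lt
    obtain ⟨k, hk⟩ := exists_reflTransGen_staircase ν
    exact ⟨k, .head hν hk⟩
  · push Not at hl
    exact ⟨μ.parts 0, by rw [← μ.eq_staircase_of_forall_not_dominoStep hl]⟩
termination_by μ.size

theorem not_dominoStep_staircase (k : ℕ) (ν : SeqPartition) :
    ¬ DominoStep (staircase k) ν := by
  rintro (⟨i, hi, hoff⟩ | ⟨i, heq, hi, -, -⟩)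
  · have h1 := hoff (i + 1) (by omega)
    have h2 := ν.antitone (Nat.le_add_right i 1)
    simp only [staircase] at hi h1
    omega
  · simp only [staircase] at heq hi
    omega

theorem checkerSum_staircase (k : ℕ) :
    (staircase k).checkerSum = if Even k then -((k / 2 : ℕ) : ℤ) else ((k + 1) / 2 : ℕ) := by
  rw [(staircase k).checkerSum_eq_sum (N := k) fun i hi => by simp only [staircase]; omega]
  simp only [staircase]
  induction k with
  | zero => simp
  | succ k ih =>
    rw [Finset.sum_range_succ']
    simp only [pow_succ, show ∀ i, k + 1 - (i + 1) = k - i from fun i => by omega, mul_neg,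
      mul_one, neg_mul, Finset.sum_neg_distrib, ih, Nat.even_add_one]
    split_ifs with h <;> simp only [Nat.even_iff] at h <;>
      push_cast <;> omega

theorem checkerSum_staircase_injective : Function.Injective fun k => (staircase k).checkerSum := by
  intro k k' h
  simp only [checkerSum_staircase, Nat.even_iff] at h
  split_ifs at h <;> omega

theorem twoCoreOf_staircase_iff {k : ℕ} :
    TwoCoreOf l (staircase k) ↔ l.checkerSum = (staircase k).checkerSum := by
  refine ⟨fun h => checkerSum_eq_of_reflTransGen h.1, fun h => ?_⟩
  obtain ⟨k', hk'⟩ := l.exists_reflTransGen_staircase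
  obtain rfl : k' = k :=
    checkerSum_staircase_injective ((checkerSum_eq_of_reflTransGen hk').symm.trans h)
  exact ⟨hk', not_dominoStep_staircase k'⟩

theorem parts_eq_sum_gap {N : ℕ} (hN : ∀ i, N ≤ i → l.parts i = 0) (i : ℕ) :
    l.parts i = ∑ j ∈ Finset.Ico i N, l.gap j := by
  have telescope :
      ∀ d, l.parts i = ∑ j ∈ Finset.Ico i (i + d), l.gap j + l.parts (i + d) := by
    intro d
    induction d with
    | zero => simp
    | succ d ih =>
      rw [← add_assoc, Finset.sum_Ico_succ_top (by omega), add_assoc, ← parts_eq_gap_add, ih]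
  rcases le_or_gt N i with h | h
  · rw [hN i h, Finset.Ico_eq_empty (by omega), Finset.sum_empty]
  · rw [telescope (N - i), Nat.add_sub_cancel' h.le, hN N le_rfl, add_zero]

theorem ext_gap {l m : SeqPartition} (h : ∀ i, l.gap i = m.gap i) : l = m := by
  have hl : ∀ i, max l.numParts m.numParts ≤ i → l.parts i = 0 := fun i hi =>
    l.parts_eq_zero_of_numParts_le (le_of_max_le_left hi)
  have hm : ∀ i, max l.numParts m.numParts ≤ i → m.parts i = 0 := fun i hi =>
    m.parts_eq_zero_of_numParts_le (le_of_max_le_right hi)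
  ext i
  rw [l.parts_eq_sum_gap hl, m.parts_eq_sum_gap hm]
  exact Finset.sum_congr rfl fun j _ => h j

def ofGaps (g : ℕ → ℕ) (N : ℕ) : SeqPartition where
  parts i := ∑ j ∈ Finset.Ico i N, g j
  antitone _ _ hij := Finset.sum_le_sum_of_subset (Finset.Ico_subset_Ico hij le_rfl)
  finite_support := (Set.finite_Iio N).subset fun i hi => by
    by_contra h
    exact hi (Finset.sum_eq_zero fun j hj => by
      simp only [Set.mem_Iio, Finset.mem_Ico] at h hj; omega)

theorem gap_ofGaps {g : ℕ → ℕ} {N : ℕ} (hg : ∀ i, N ≤ i → g i = 0) (i : ℕ) :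
    (ofGaps g N).gap i = g i := by
  rcases le_or_gt N i with h | h
  · simp only [gap, ofGaps, Finset.Ico_eq_empty_of_le h,
      Finset.Ico_eq_empty_of_le (h.trans (Nat.le_add_right i 1)), Finset.sum_empty, hg i h,
      Nat.sub_zero]
  · simp only [gap, ofGaps, Finset.sum_eq_sum_Ico_succ_bot h, Nat.add_sub_cancel]

def Flat : Prop := ∀ i, l.gap i ≤ 1

noncomputable def flatten : SeqPartition := ofGaps (fun i => l.gap i % 2) l.numParts

noncomputable def halveGaps : SeqPartition := ofGaps (fun i => l.gap i / 2) l.numParts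

def recombine (ρ E : SeqPartition) : SeqPartition where
  parts i := ρ.parts i + 2 * E.parts i
  antitone _ _ hij := by
    have := ρ.antitone hij
    have := E.antitone hij
    omega
  finite_support := (ρ.finite_support.union E.finite_support).subset fun i hi => by
    simp only [Function.mem_support, Set.mem_union] at hi ⊢
    omega

theorem gap_flatten (i : ℕ) : l.flatten.gap i = l.gap i % 2 :=
  gap_ofGaps (fun _ hi => by rw [l.gap_eq_zero_of_numParts_le hi]) i

theorem gap_halveGaps (i : ℕ) : l.halveGaps.gap i = l.gap i / 2 :=
  gap_ofGaps (fun _ hi => by rw [l.gap_eq_zero_of_numParts_le hi]) i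

theorem gap_recombine (ρ E : SeqPartition) (i : ℕ) :
    (recombine ρ E).gap i = ρ.gap i + 2 * E.gap i := by
  have := ρ.antitone (Nat.le_add_right i 1)
  have := E.antitone (Nat.le_add_right i 1)
  simp only [gap, recombine]
  omega

theorem flat_flatten : l.flatten.Flat := fun i => by
  rw [gap_flatten]
  omega

theorem recombine_flatten_halveGaps : recombine l.flatten l.halveGaps = l :=
  ext_gap fun i => by
    rw [gap_recombine, gap_flatten, gap_halveGaps]
    omega

theorem flatten_recombine {ρ : SeqPartition} (hρ : ρ.Flat) (E : SeqPartition) :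
    (recombine ρ E).flatten = ρ :=
  ext_gap fun i => by
    rw [gap_flatten, gap_recombine]
    have := hρ i
    omega

theorem halveGaps_recombine {ρ : SeqPartition} (hρ : ρ.Flat) (E : SeqPartition) :
    (recombine ρ E).halveGaps = E :=
  ext_gap fun i => by
    rw [gap_halveGaps, gap_recombine]
    have := hρ i
    omega

theorem size_recombine (ρ E : SeqPartition) : (recombine ρ E).size = ρ.size + 2 * E.size := by
  set N := max ρ.numParts E.numParts
  have hρ : ∀ i, N ≤ i → ρ.parts i = 0 := fun i hi =>
    ρ.parts_eq_zero_of_numParts_le (le_of_max_le_left hi)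
  have hE : ∀ i, N ≤ i → E.parts i = 0 := fun i hi =>
    E.parts_eq_zero_of_numParts_le (le_of_max_le_right hi)
  have hρE : ∀ i, N ≤ i → (recombine ρ E).parts i = 0 := fun i hi => by
    simp only [recombine, hρ i hi, hE i hi]
  rw [size_eq_sum _ hρE, size_eq_sum _ hρ, size_eq_sum _ hE, Finset.mul_sum,
    ← Finset.sum_add_distrib]
  rfl

theorem checkerSum_recombine (ρ E : SeqPartition) :
    (recombine ρ E).checkerSum = ρ.checkerSum := by
  set N := max ρ.numParts E.numParts
  have hρ : ∀ i, N ≤ i → ρ.parts i = 0 := fun i hi =>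
    ρ.parts_eq_zero_of_numParts_le (le_of_max_le_left hi)
  have hρE : ∀ i, N ≤ i → (recombine ρ E).parts i = 0 := fun i hi => by
    simp only [recombine, hρ i hi, E.parts_eq_zero_of_numParts_le (le_of_max_le_right hi)]
  rw [checkerSum_eq_sum _ hρE, checkerSum_eq_sum _ hρ]
  simp only [recombine, Nat.add_mul_mod_self_left]

theorem size_eq_size_flatten_add : l.size = l.flatten.size + 2 * l.halveGaps.size := by
  conv_lhs => rw [← l.recombine_flatten_halveGaps]
  exact size_recombine _ _

theorem checkerSum_flatten : l.flatten.checkerSum = l.checkerSum := by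
  conv_rhs => rw [← l.recombine_flatten_halveGaps]
  exact (checkerSum_recombine _ _).symm

theorem h20_eq_halveGaps_parts_zero : l.h20 = l.halveGaps.parts 0 := by
  rw [h20_eq_sum_gap, halveGaps, ofGaps, Finset.range_eq_Ico]

theorem column_finite (i : ℕ) : {r | i < l.parts r}.Finite :=
  l.finite_support.subset fun r (hr : i < l.parts r) => (by omega : l.parts r ≠ 0)

theorem isLowerSet_column (i : ℕ) : IsLowerSet {r | i < l.parts r} :=
  fun _ _ hba ha => lt_of_lt_of_le ha (l.antitone hba)

noncomputable def conj : SeqPartition where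
  parts i := {r | i < l.parts r}.ncard
  antitone _ _ hij := Set.ncard_le_ncard (fun _ hr => lt_of_le_of_lt hij hr) (l.column_finite _)
  finite_support := (Set.finite_Iio (l.parts 0)).subset fun i hi => by
    obtain ⟨r, hr⟩ := Set.nonempty_of_ncard_ne_zero hi
    exact lt_of_lt_of_le hr (l.antitone (Nat.zero_le r))

theorem lt_conj_parts_iff {i j : ℕ} : j < l.conj.parts i ↔ i < l.parts j := by
  rw [← Set.mem_Iio, conj, ← (l.isLowerSet_column i).eq_Iio_ncard (l.column_finite i)]
  rfl

theorem conj_conj : l.conj.conj = l :=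
  ext (funext fun _ => eq_of_forall_lt_iff fun _ => by
    rw [lt_conj_parts_iff, lt_conj_parts_iff])

theorem size_conj : l.conj.size = l.size := by
  have hcells : l.conj.cells = Prod.swap ⁻¹' l.cells :=
    Set.ext fun _ => l.lt_conj_parts_iff
  rw [size, size, hcells, Set.ncard_preimage_of_injective_subset_range Prod.swap_injective
    (by rw [Prod.swap_surjective.range_eq]; exact Set.subset_univ _)]

theorem checkerSum_conj : l.conj.checkerSum = l.checkerSum :=
  Finset.sum_equiv (Equiv.prodComm ℕ ℕ) (fun _ => by
    rw [mem_cellFinset, mem_cellFinset]; exact l.lt_conj_parts_iff)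
    (fun c _ => by rw [Equiv.prodComm_apply, Prod.fst_swap, Prod.snd_swap, add_comm])

theorem conj_parts_zero : l.conj.parts 0 = l.numParts :=
  eq_of_forall_lt_iff fun _ => by rw [lt_conj_parts_iff, lt_numParts_iff, Nat.pos_iff_ne_zero]

theorem gap_conj (v : ℕ) : l.conj.gap v = {r | l.parts r = v + 1}.ncard := by
  have hsub : {r | v + 1 < l.parts r} ⊆ {r | v < l.parts r} :=
    fun r (hr : v + 1 < l.parts r) => show v < l.parts r by omega
  have hdiff : {r | v < l.parts r} \ {r | v + 1 < l.parts r} = {r | l.parts r = v + 1} := by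
    ext r
    simp only [Set.mem_sdiff, Set.mem_ofPred_eq, not_lt]
    omega
  change {r | v < l.parts r}.ncard - {r | v + 1 < l.parts r}.ncard = _
  rw [← Set.ncard_sdiff hsub (l.column_finite _), hdiff]

theorem one_lt_ncard_parts_eq_iff {v : ℕ} (hv : v ≠ 0) :
    1 < {r | l.parts r = v}.ncard ↔ ∃ i, l.parts i = v ∧ l.parts (i + 1) = v := by
  have hfin : {r | l.parts r = v}.Finite :=
    l.finite_support.subset fun r (hr : l.parts r = v) => (by omega : l.parts r ≠ 0)
  rw [Set.one_lt_ncard_iff hfin]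
  constructor
  · rintro ⟨a, b, ha, hb, hab⟩
    have ha : l.parts a = v := ha
    have hb : l.parts b = v := hb
    rcases Nat.lt_or_gt_of_ne hab with h | h
    · have := l.antitone (Nat.le_add_right a 1)
      have := l.antitone (show a + 1 ≤ b from h)
      exact ⟨a, ha, by omega⟩
    · have := l.antitone (Nat.le_add_right b 1)
      have := l.antitone (show b + 1 ≤ a from h)
      exact ⟨b, hb, by omega⟩
  · rintro ⟨i, h1, h2⟩
    exact ⟨i, i + 1, h1, h2, by omega⟩

theorem isGreatest_numParts :
    IsGreatest {v | v = 0 ∨ ∃ j, v = j + 1 ∧ l.gap j ≠ 0} l.numParts := by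
  refine ⟨?_, ?_⟩
  · obtain h | h := Nat.eq_zero_or_eq_succ_pred l.numParts
    · exact Or.inl h
    · have h1 := l.lt_numParts_iff.1 (show l.numParts.pred < l.numParts by omega)
      have h2 := l.parts_eq_zero_of_numParts_le (show l.numParts ≤ l.numParts.pred + 1 by omega)
      refine Or.inr ⟨_, h, ?_⟩
      rw [gap, h2]
      exact h1
  · rintro v (rfl | ⟨j, rfl, hj⟩)
    · exact Nat.zero_le _
    · exact l.lt_numParts_iff.2 (by rw [gap] at hj; omega)

theorem a2_eq_numParts_halveGaps_conj : l.a2 = l.conj.halveGaps.numParts := by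
  have hrepeated : {v | ∃ i, l.parts i = v ∧ l.parts (i + 1) = v} =
      {v | v = 0 ∨ ∃ j, v = j + 1 ∧ l.conj.halveGaps.gap j ≠ 0} := by
    ext v
    rcases v with _ | v
    · simp only [Set.mem_ofPred_eq, true_or, iff_true]
      exact ⟨l.numParts, l.parts_eq_zero_of_numParts_le le_rfl,
        l.parts_eq_zero_of_numParts_le (Nat.le_add_right _ 1)⟩
    · simp only [Set.mem_ofPred_eq, Nat.add_one_ne_zero, false_or, Nat.add_right_cancel_iff,
        exists_eq_left', gap_halveGaps, gap_conj,
        ← l.one_lt_ncard_parts_eq_iff (Nat.add_one_ne_zero v)]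
      omega
  rw [a2, hrepeated]
  exact l.conj.halveGaps.isGreatest_numParts.csSup_eq

noncomputable def flatDecomposition :
    SeqPartition ≃ {ρ : SeqPartition // ρ.Flat} × SeqPartition where
  toFun l := (⟨l.flatten, l.flat_flatten⟩, l.halveGaps)
  invFun p := recombine p.1 p.2
  left_inv := recombine_flatten_halveGaps
  right_inv := fun ⟨⟨_, hρ⟩, E⟩ =>
    Prod.ext (Subtype.ext (flatten_recombine hρ E)) (halveGaps_recombine hρ E)

noncomputable def conjEquiv : SeqPartition ≃ SeqPartition where
  toFun := conj
  invFun := conj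
  left_inv := conj_conj
  right_inv := conj_conj

noncomputable def conjFlatDecomposition :
    SeqPartition ≃ {ρ : SeqPartition // ρ.Flat} × SeqPartition :=
  conjEquiv.trans (flatDecomposition.trans ((Equiv.refl _).prodCongr conjEquiv))

end SeqPartition

theorem statement13 (n k r : ℕ) :
    {μ : SeqPartition | μ.size = n ∧ TwoCoreOf μ (staircase k) ∧ μ.h20 = r}.ncard =
    {μ : SeqPartition | μ.size = n ∧ TwoCoreOf μ (staircase k) ∧ μ.a2 = r}.ncard := by
  set S : Set ({ρ : SeqPartition // ρ.Flat} × SeqPartition) := {p |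
    p.1.1.size + 2 * p.2.size = n ∧ p.1.1.checkerSum = (staircase k).checkerSum ∧
      p.2.parts 0 = r}
  have hA : {μ : SeqPartition | μ.size = n ∧ TwoCoreOf μ (staircase k) ∧ μ.h20 = r} =
      SeqPartition.flatDecomposition ⁻¹' S := by
    ext μ
    open SeqPartition in
    simp only [Set.mem_ofPred_eq, Set.mem_preimage, S, flatDecomposition, Equiv.coe_fn_mk,
      twoCoreOf_staircase_iff, ← size_eq_size_flatten_add, checkerSum_flatten,
      h20_eq_halveGaps_parts_zero]
  have hB : {μ : SeqPartition | μ.size = n ∧ TwoCoreOf μ (staircase k) ∧ μ.a2 = r} =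
      SeqPartition.conjFlatDecomposition ⁻¹' S := by
    ext μ
    open SeqPartition in
    simp only [Set.mem_ofPred_eq, Set.mem_preimage, S, conjFlatDecomposition, flatDecomposition,
      conjEquiv, Equiv.trans_apply, Equiv.coe_fn_mk, Equiv.prodCongr_apply, Prod.map,
      Equiv.refl_apply, size_conj, ← size_eq_size_flatten_add, checkerSum_flatten,
      checkerSum_conj, conj_parts_zero, twoCoreOf_staircase_iff, a2_eq_numParts_halveGaps_conj]
  rw [hA, hB, Equiv.ncard_preimage, Equiv.ncard_preimage]
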